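/- arXiv:1503.02564 — 2 statements merged into one kernel-verified Lean document; each statement's English description precedes it below -/
import Mathlib

section
/- Let Y be a family of n×n-indexed matrices (or scalars) satisfying the shift-invariance Y_{n,q} = Y_{n-1,q-1} for all 2 ≤ q ≤ n. Define L recursively by L_{n,n} = Y_{n,n} and L_{n,s} = ∑_{q=s}^{n-1} Y_{n,q} L_{q,s} for 1 ≤ s < n. Then L is also shift-invariant: L_{n,s} = L_{n-1,s-1} for all 2 ≤ s ≤ n. -/
/- Shifting both indices of the recursion by one reindexes its sum `q ↦ q + 1`; the summands then
agree by shift-invariance of `Y` and, inductively, of `L` on the smaller first indices `q < n`. -/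

open Finset

theorem recursive_family_shift_succ {R : Type*} [NonUnitalNonAssocSemiring R]
    (Y L : ℕ → ℕ → R) (hY : ∀ n q : ℕ, 1 ≤ q → q ≤ n → Y (n + 1) (q + 1) = Y n q)
    (hLdiag : ∀ n : ℕ, L n n = Y n n)
    (hLrec : ∀ n s : ℕ, 1 ≤ s → s < n → L n s = ∑ q ∈ Icc s (n - 1), Y n q * L q s) :
    ∀ n s : ℕ, 1 ≤ s → s ≤ n → L (n + 1) (s + 1) = L n s := by
  intro n
  induction n using Nat.strong_induction_on with
  | _ n ih =>
    intro s hs hsn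
    obtain rfl | hsn := hsn.eq_or_lt
    · rw [hLdiag, hLdiag, hY s s hs le_rfl]
    · have hreindex : Icc (s + 1) n = (Icc s (n - 1)).map (addRightEmbedding 1) := by
        rw [map_add_right_Icc, Nat.sub_add_cancel (by omega)]
      rw [hLrec (n + 1) (s + 1) (by omega) (by omega), hLrec n s hs hsn, Nat.add_sub_cancel,
        hreindex, sum_map]
      refine sum_congr rfl fun q hq => ?_
      obtain ⟨hsq, hqn⟩ := mem_Icc.mp hq
      rw [addRightEmbedding_apply, hY n q (hs.trans hsq) (by omega), ih q (by omega) s hs hsq]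

/-- If the family `Y_{n,q}` of matrices is shift-invariant (`Y_{n,q} = Y_{n-1,q-1}` for
`2 ≤ q ≤ n`) and `L` is defined recursively by `L_{n,n} = Y_{n,n}` and
`L_{n,s} = ∑_{q=s}^{n-1} Y_{n,q} L_{q,s}` for `1 ≤ s < n`, then `L` is also
shift-invariant: `L_{n,s} = L_{n-1,s-1}` for `2 ≤ s ≤ n`. -/
theorem shift_invariance_of_recursive_L
    (m : ℕ) (Y L : ℕ → ℕ → Matrix (Fin m) (Fin m) ℂ)
    (hY : ∀ n q : ℕ, 2 ≤ q → q ≤ n → Y n q = Y (n - 1) (q - 1))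
    (hLdiag : ∀ n : ℕ, L n n = Y n n)
    (hLrec : ∀ n s : ℕ, 1 ≤ s → s < n →
      L n s = ∑ q ∈ Finset.Icc s (n - 1), Y n q * L q s) :
    ∀ n s : ℕ, 2 ≤ s → s ≤ n → L n s = L (n - 1) (s - 1) := by
  intro n s hs hsn
  obtain ⟨s, rfl⟩ := Nat.exists_eq_add_of_le' (show 1 ≤ s by omega)
  obtain ⟨n, rfl⟩ := Nat.exists_eq_add_of_le' (show 1 ≤ n by omega)
  exact recursive_family_shift_succ Y L (fun n q hq hqn => hY (n + 1) (q + 1) (by omega) (by omega))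
    hLdiag hLrec n s (by omega) (by omega)
end

section
/- Let f : C → R and consider the Durán–Sanz Serna scheme for the nonlinear Schrödinger equation: i(u_n − u_{n-1})/Δt + ∂_{xx} v_n + f(v_n) v_n = 0 with v_n = (u_n+u_{n-1})/2 and homogeneous Neumann boundary conditions on (a,b). Then the scheme conserves the discrete L² norm: ‖u_n‖_{L²(a,b)} = ‖u_{n-1}‖_{L²(a,b)}. -/
/-!
Multiply the scheme by `conj v_n` and take imaginary parts. Since `f` is real, the
nonlinear term `f(v_n)|v_n|²` is real and drops out, and the time difference contributes
`Im(i (u_n - u_{n-1}) conj (u_n + u_{n-1})) / 2 = (|u_n|² - |u_{n-1}|²) / 2`. Hence, pointwise,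
`|u_n|² - |u_{n-1}|² = -2Δt Im(v_n'' conj v_n)`, and the right-hand side is the derivative of
`-2Δt Im(v_n' conj v_n)` because `v_n' conj v_n'` is real. Integrating over `(a,b)`, the
Neumann conditions kill the boundary terms.
-/

open Complex MeasureTheory ComplexConjugate

theorem HasDerivAt.im_mul_conj {w v : ℝ → ℂ} {w' v' : ℂ} {x : ℝ}
    (hw : HasDerivAt w w' x) (hv : HasDerivAt v v' x) :
    HasDerivAt (fun y => (w y * conj (v y)).im) ((w' * conj (v x) + w x * conj v').im) x :=
  imCLM.hasFDerivAt.comp_hasDerivAt x (hw.mul hv.star)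

theorem hasDerivAt_im_deriv_mul_conj {v : ℝ → ℂ} {x : ℝ}
    (hv : DifferentiableAt ℝ v x) (hv' : DifferentiableAt ℝ (deriv v) x) :
    HasDerivAt (fun y => (deriv v y * conj (v y)).im) ((deriv (deriv v) x * conj (v x)).im) x := by
  have h := hv'.hasDerivAt.im_mul_conj hv.hasDerivAt
  rwa [add_im, mul_conj, ofReal_im, add_zero] at h

theorem sq_norm_sub_sq_norm_eq_of_midpoint_step {u₀ u₁ d : ℂ} {c Δt : ℝ} (hΔt : Δt ≠ 0)
    (h : I * (u₁ - u₀) / Δt + d + c * ((u₁ + u₀) / 2) = 0) :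
    ‖u₁‖ ^ 2 - ‖u₀‖ ^ 2 = -2 * Δt * (d * conj ((u₁ + u₀) / 2)).im := by
  obtain rfl : d = -(I * (u₁ - u₀) / Δt) - c * ((u₁ + u₀) / 2) := by linear_combination h
  simp only [Complex.sq_norm, normSq_apply, mul_im, mul_re, sub_re, sub_im, neg_re, neg_im,
    add_re, add_im, div_ofReal_re, div_ofReal_im, div_ofNat_re, div_ofNat_im, ofReal_re, ofReal_im,
    I_re, I_im, conj_re, conj_im]
  field_simp
  ring

/-- The Durán–Sanz Serna scheme for the nonlinear Schrödinger equation
(`i(u_n - u_{n-1})/Δt + ∂ₓₓ v_n + f(v_n) v_n = 0` with `v_n = (u_n + u_{n-1})/2`,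
`f` real-valued, and homogeneous Neumann boundary conditions) conserves the
discrete L² norm: `‖u_n‖_{L²(a,b)} = ‖u_{n-1}‖_{L²(a,b)}`. -/
theorem duran_sanz_serna_L2_conservation
    (a b Δt : ℝ) (hab : a < b) (hΔt : 0 < Δt)
    (f : ℂ → ℝ) (un uprev v : ℝ → ℂ)
    (hv : ContDiff ℝ 2 v) (hun : Continuous un) (huprev : Continuous uprev)
    (hvdef : ∀ x : ℝ, v x = (un x + uprev x) / 2)
    (hscheme : ∀ x ∈ Set.Icc a b,
      I * (un x - uprev x) / (Δt : ℂ) + deriv (deriv v) x + (f (v x) : ℂ) * v x = 0)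
    (hNeumann_a : deriv v a = 0) (hNeumann_b : deriv v b = 0) :
    ∫ x in a..b, ‖un x‖ ^ 2 = ∫ x in a..b, ‖uprev x‖ ^ 2 := by
  set G : ℝ → ℝ := fun x => -2 * Δt * (deriv v x * conj (v x)).im
  have hG : ∀ x ∈ Set.uIcc a b, HasDerivAt G (‖un x‖ ^ 2 - ‖uprev x‖ ^ 2) x := by
    intro x hx
    rw [Set.uIcc_of_le hab.le] at hx
    have hstep := hscheme x hx
    rw [hvdef x] at hstep
    rw [sq_norm_sub_sq_norm_eq_of_midpoint_step hΔt.ne' hstep, ← hvdef x]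
    exact (hasDerivAt_im_deriv_mul_conj (hv.differentiable (by norm_num) x)
      (hv.differentiable_deriv_two x)).const_mul _
  have hsq : ∀ {u : ℝ → ℂ}, Continuous u → IntervalIntegrable (fun x => ‖u x‖ ^ 2) volume a b :=
    fun hu => (hu.norm.pow 2).intervalIntegrable a b
  have hdiff := intervalIntegral.integral_eq_sub_of_hasDerivAt hG ((hsq hun).sub (hsq huprev))
  rw [intervalIntegral.integral_sub (hsq hun) (hsq huprev)] at hdiff
  simpa [G, hNeumann_a, hNeumann_b, sub_eq_zero] using hdiff
end
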